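/- q-derivative of the little q-Jacobi polynomial: let q ∈ (0,1), n ≥ 1 an integer, and a, b real numbers with a q^j ≠ 1 for j = 1, …, n. Then the polynomial identity p_n(x; a, b) − p_n(qx; a, b) = (1 − q) x · [q (1 − q^{−n})(1 − a b q^{n+1}) / ((1 − q)(1 − aq))] · p_{n−1}(x; qa, qb) holds for all x; equivalently, the q-derivative D_q p_n(x; a, b) := (p_n(x;a,b) − p_n(qx;a,b)) / ((1−q)x) equals q (1 − q^{−n})(1 − a b q^{n+1}) / ((1 − q)(1 − aq)) · p_{n−1}(x; qa, qb). -/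
import Mathlib


/-- The q-Pochhammer symbol `(a;q)_k = ∏_{j=0}^{k-1} (1 - a q^j)`. -/
noncomputable def qPoch (q a : ℝ) (k : ℕ) : ℝ :=
  ∏ j ∈ Finset.range k, (1 - a * q ^ j)

/-- The little q-Jacobi polynomial
`p_n(x; a, b) = ∑_{k=0}^{n} [(q^{−n};q)_k (a b q^{n+1};q)_k / ((a q;q)_k (q;q)_k)] (q x)^k`. -/
noncomputable def littleQJacobi (q a b : ℝ) (n : ℕ) : Polynomial ℝ :=
  ∑ k ∈ Finset.range (n + 1),
    Polynomial.C (qPoch q (q ^ (-(n : ℤ))) k * qPoch q (a * b * q ^ (n + 1)) k /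
      (qPoch q (a * q) k * qPoch q q k)) * (Polynomial.C q * Polynomial.X) ^ k

lemma qPoch_succ' (q c : ℝ) (k : ℕ) :
    qPoch q c (k+1) = (1 - c) * qPoch q (c*q) k := by
  unfold qPoch
  rw [Finset.prod_range_succ']
  simp only [pow_zero, mul_one]
  rw [mul_comm]
  congr 1
  exact Finset.prod_congr rfl fun j _ => by ring

lemma qPoch_succ (q c : ℝ) (k : ℕ) :
    qPoch q c (k+1) = qPoch q c k * (1 - c * q ^ k) := by
  unfold qPoch; rw [Finset.prod_range_succ]

lemma qPoch_q_ne (q : ℝ) (hq0 : 0 < q) (hq1 : q < 1) (k : ℕ) : qPoch q q k ≠ 0 := by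
  unfold qPoch
  apply Finset.prod_ne_zero_iff.2
  intro j _
  have h1 : q ^ j ≤ 1 := pow_le_one₀ hq0.le hq1.le
  nlinarith

lemma qPoch_aq_ne (q a : ℝ) (n k : ℕ) (hk : k ≤ n)
    (ha : ∀ j : ℕ, 1 ≤ j → j ≤ n → a * q ^ j ≠ 1) : qPoch q (a*q) k ≠ 0 := by
  unfold qPoch
  apply Finset.prod_ne_zero_iff.2
  intro j hj
  have hj' : j + 1 ≤ n := le_trans (Finset.mem_range.1 hj) hk
  have := ha (j+1) (Nat.le_add_left 1 j) hj'
  intro h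
  apply this
  rw [pow_succ]
  nlinarith [h]

lemma key (q a b : ℝ) (m k : ℕ) (hk : k ≤ m) (hq0 : 0 < q) (hq1 : q < 1)
    (ha : ∀ j : ℕ, 1 ≤ j → j ≤ m + 1 → a * q ^ j ≠ 1) :
    (qPoch q (q ^ (-((m+1 : ℕ) : ℤ))) (k+1) * qPoch q (a*b*q^(m+1+1)) (k+1) /
      (qPoch q (a*q) (k+1) * qPoch q q (k+1))) * (q * (1 - q^(k+1)))
    = (1-q) * (q * (1 - q ^ (-((m+1 : ℕ) : ℤ))) * (1 - a*b*q^(m+1+1)) / ((1-q)*(1-a*q))) *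
      (qPoch q (q ^ (-(m : ℤ))) k * qPoch q (q*a*(q*b)*q^(m+1)) k /
        (qPoch q (q*a*q) k * qPoch q q k)) := by
  have hq : q ≠ 0 := hq0.ne'
  -- rewrite shifted pochhammers
  have e1 : qPoch q (q ^ (-((m+1 : ℕ) : ℤ))) (k+1)
      = (1 - q ^ (-((m+1 : ℕ) : ℤ))) * qPoch q (q ^ (-(m : ℤ))) k := by
    rw [qPoch_succ']
    congr 2
    have h : (-((m:ℤ)+1)) + 1 = -(m:ℤ) := by ring
    push_cast
    rw [← h, zpow_add₀ hq, zpow_one]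
  have e2 : qPoch q (a*b*q^(m+1+1)) (k+1)
      = (1 - a*b*q^(m+1+1)) * qPoch q (q*a*(q*b)*q^(m+1)) k := by
    rw [qPoch_succ']
    congr 2
    ring
  have e3 : qPoch q (a*q) (k+1) = (1 - a*q) * qPoch q (q*a*q) k := by
    rw [qPoch_succ']
    congr 2
    ring
  have e4 : qPoch q q (k+1) = qPoch q q k * (1 - q^(k+1)) := by
    rw [qPoch_succ]
    congr 2
    rw [pow_succ]; ring
  rw [e1, e2, e3, e4]
  have h1 : (1 : ℝ) - q ≠ 0 := by linarith
  have h2 : (1 : ℝ) - a*q ≠ 0 := by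
    have := ha 1 le_rfl (by omega)
    intro h; apply this; rw [pow_one]; linarith
  have h3 : qPoch q (q*a*q) k ≠ 0 := by
    have := qPoch_aq_ne q (a*q) (m) k hk (fun j hj1 hj2 => by
      have := ha (j+1) (by omega) (by omega)
      intro h; apply this; rw [pow_succ]; nlinarith [h])
    convert this using 2
    ring
  have h4 : qPoch q q k ≠ 0 := qPoch_q_ne q hq0 hq1 k
  have h5 : (1 : ℝ) - q^(k+1) ≠ 0 := by
    have : q ^ (k+1) < 1 := pow_lt_one₀ hq0.le hq1 (by omega)
    linarith
  field_simp




/-- the q-derivative of the little q-Jacobi polynomial: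
`p_n(x; a, b) − p_n(qx; a, b)
  = (1 − q) x · [q (1 − q^{−n})(1 − a b q^{n+1}) / ((1 − q)(1 − aq))] ·
      p_{n−1}(x; qa, qb)`,
i.e. `D_q p_n(x; a, b) = q (1 − q^{−n})(1 − a b q^{n+1}) / ((1 − q)(1 − aq)) ·
p_{n−1}(x; qa, qb)`. -/
theorem littleQJacobi_qDerivative (q a b : ℝ) (n : ℕ) (hn : 1 ≤ n)
    (hq0 : 0 < q) (hq1 : q < 1)
    (ha : ∀ j : ℕ, 1 ≤ j → j ≤ n → a * q ^ j ≠ 1) :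
    ∀ x : ℝ,
      (littleQJacobi q a b n).eval x - (littleQJacobi q a b n).eval (q * x) =
        (1 - q) * x *
          (q * (1 - q ^ (-(n : ℤ))) * (1 - a * b * q ^ (n + 1)) /
            ((1 - q) * (1 - a * q))) *
          (littleQJacobi q (q * a) (q * b) (n - 1)).eval x := by
  intro x
  obtain ⟨m, rfl⟩ : ∃ m, n = m + 1 := ⟨n - 1, by omega⟩
  simp only [Nat.add_sub_cancel, littleQJacobi, Polynomial.eval_finset_sum,
    Polynomial.eval_mul, Polynomial.eval_pow, Polynomial.eval_C, Polynomial.eval_X]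
  rw [← Finset.sum_sub_distrib, Finset.mul_sum, Finset.sum_range_succ']
  simp only [pow_zero, mul_one, sub_self, mul_zero, add_zero]
  apply Finset.sum_congr rfl
  intro k hk
  have hk' : k ≤ m := by simpa using Nat.lt_succ_iff.1 (Finset.mem_range.1 hk)
  have := key q a b m k hk' hq0 hq1 ha
  have hx : (q * x) ^ (k+1) - (q * (q * x)) ^ (k+1)
      = (q * (1 - q ^ (k+1))) * (x * (q * x) ^ k) := by
    rw [mul_pow q (q*x), pow_succ (q*x) k]
    ring
  calc qPoch q (q ^ (-((m+1 : ℕ) : ℤ))) (k+1) * qPoch q (a*b*q^(m+1+1)) (k+1) /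
      (qPoch q (a*q) (k+1) * qPoch q q (k+1)) * (q * x) ^ (k+1)
      - qPoch q (q ^ (-((m+1 : ℕ) : ℤ))) (k+1) * qPoch q (a*b*q^(m+1+1)) (k+1) /
      (qPoch q (a*q) (k+1) * qPoch q q (k+1)) * (q * (q * x)) ^ (k+1)
      = ((qPoch q (q ^ (-((m+1 : ℕ) : ℤ))) (k+1) * qPoch q (a*b*q^(m+1+1)) (k+1) /
      (qPoch q (a*q) (k+1) * qPoch q q (k+1))) * (q * (1 - q^(k+1)))) * (x * (q * x) ^ k) := by
        rw [← mul_sub, hx]; ring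
    _ = ((1-q) * (q * (1 - q ^ (-((m+1 : ℕ) : ℤ))) * (1 - a*b*q^(m+1+1)) / ((1-q)*(1-a*q))) *
      (qPoch q (q ^ (-(m : ℤ))) k * qPoch q (q*a*(q*b)*q^(m+1)) k /
        (qPoch q (q*a*q) k * qPoch q q k))) * (x * (q * x) ^ k) := by rw [this]
    _ = _ := by ring
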